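/- Repeatedly replacing any two intersecting axis-aligned rectangles in a finite family by their bounding box terminates, and the final family of pairwise disjoint rectangles is independent of the order of merges. -/
import Mathlib


/-- An axis-aligned rectangle [x1,x2]×[y1,y2] of integer intervals. -/
structure Rect where
  x1 : ℤ
  x2 : ℤ
  y1 : ℤ
  y2 : ℤ
deriving DecidableEq

/-- The set of grid points of a rectangle. -/
def Rect.toSet (R : Rect) : Set (ℤ × ℤ) :=
  Set.Icc R.x1 R.x2 ×ˢ Set.Icc R.y1 R.y2

/-- A nonempty rectangle. -/
def Rect.NE (R : Rect) : Prop :=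
  R.x1 ≤ R.x2 ∧ R.y1 ≤ R.y2

/-- The bounding box: the smallest rectangle containing R ∪ S. -/
def Rect.bbox (R S : Rect) : Rect :=
  ⟨min R.x1 S.x1, max R.x2 S.x2, min R.y1 S.y1, max R.y2 S.y2⟩

/-- A merge step: two intersecting rectangles of the family are replaced by
    their bounding box. -/
def MergeStep (F G : Finset Rect) : Prop :=
  ∃ R ∈ F, ∃ S ∈ F, R ≠ S ∧ (R.toSet ∩ S.toSet).Nonempty ∧
    G = insert (Rect.bbox R S) ((F.erase R).erase S)

/-- A family is final (normal) if no merge step applies to it. -/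
def Final (F : Finset Rect) : Prop :=
  ¬ ∃ G : Finset Rect, MergeStep F G

namespace RectMergeAux

/-- Box containment, expressed via coordinates. -/
def Sub (X Y : Rect) : Prop :=
  Y.x1 ≤ X.x1 ∧ X.x2 ≤ Y.x2 ∧ Y.y1 ≤ X.y1 ∧ X.y2 ≤ Y.y2

lemma Sub.refl (X : Rect) : Sub X X := ⟨le_refl _, le_refl _, le_refl _, le_refl _⟩

lemma Sub.trans {X Y Z : Rect} (h1 : Sub X Y) (h2 : Sub Y Z) : Sub X Z := by
  obtain ⟨a, b, c, d⟩ := h1; obtain ⟨a', b', c', d'⟩ := h2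
  exact ⟨le_trans a' a, le_trans b b', le_trans c' c, le_trans d d'⟩

lemma Sub.antisymm {X Y : Rect} (h1 : Sub X Y) (h2 : Sub Y X) : X = Y := by
  obtain ⟨a, b, c, d⟩ := h1; obtain ⟨a', b', c', d'⟩ := h2
  cases X; cases Y
  simp only [Rect.mk.injEq]
  simp only at a b c d a' b' c' d'
  omega

lemma toSet_mono {X Y : Rect} (h : Sub X Y) : X.toSet ⊆ Y.toSet := by
  obtain ⟨a, b, c, d⟩ := h
  exact Set.prod_mono (Set.Icc_subset_Icc a b) (Set.Icc_subset_Icc c d)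

lemma sub_bbox_left (R S : Rect) : Sub R (R.bbox S) :=
  ⟨min_le_left _ _, le_max_left _ _, min_le_left _ _, le_max_left _ _⟩

lemma sub_bbox_right (R S : Rect) : Sub S (R.bbox S) :=
  ⟨min_le_right _ _, le_max_right _ _, min_le_right _ _, le_max_right _ _⟩

lemma bbox_sub {R S T : Rect} (h1 : Sub R T) (h2 : Sub S T) : Sub (R.bbox S) T := by
  obtain ⟨a, b, c, d⟩ := h1; obtain ⟨a', b', c', d'⟩ := h2
  exact ⟨le_min a a', max_le b b', le_min c c', max_le d d'⟩

lemma ne_nonempty {R : Rect} (h : R.NE) : R.toSet.Nonempty :=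
  ⟨(R.x1, R.y1), ⟨⟨le_refl _, h.1⟩, ⟨le_refl _, h.2⟩⟩⟩

lemma bbox_ne {R S : Rect} (h : R.NE) : (R.bbox S).NE :=
  ⟨le_trans (min_le_left _ _) (le_trans h.1 (le_max_left _ _)),
   le_trans (min_le_left _ _) (le_trans h.2 (le_max_left _ _))⟩

/-- Rectangles generated from `F` by bounding boxes of overlapping pairs. -/
inductive Gen (F : Finset Rect) : Rect → Prop
  | base {X : Rect} : X ∈ F → Gen F X
  | merge {R S : Rect} : Gen F R → Gen F S → (R.toSet ∩ S.toSet).Nonempty →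
      Gen F (R.bbox S)

lemma step_ne {G H : Finset Rect} (h : MergeStep G H) (hG : ∀ R ∈ G, R.NE) :
    ∀ R ∈ H, R.NE := by
  obtain ⟨R, hR, S, hS, hRS, hover, rfl⟩ := h
  intro X hX
  rcases Finset.mem_insert.mp hX with h | h
  · exact h ▸ bbox_ne (hG R hR)
  · exact hG X (Finset.mem_of_mem_erase (Finset.mem_of_mem_erase h))

lemma step_gen {F G H : Finset Rect} (h : MergeStep G H) (hG : ∀ R ∈ G, Gen F R) :
    ∀ R ∈ H, Gen F R := by
  obtain ⟨R, hR, S, hS, hRS, hover, rfl⟩ := h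
  intro X hX
  rcases Finset.mem_insert.mp hX with h | h
  · exact h ▸ Gen.merge (hG R hR) (hG S hS) hover
  · exact hG X (Finset.mem_of_mem_erase (Finset.mem_of_mem_erase h))

lemma step_cover {G H : Finset Rect} (h : MergeStep G H) :
    ∀ X ∈ G, ∃ Y ∈ H, Sub X Y := by
  obtain ⟨R, hR, S, hS, hRS, hover, rfl⟩ := h
  intro X hX
  by_cases hXR : X = R
  · exact ⟨R.bbox S, Finset.mem_insert_self _ _, hXR ▸ sub_bbox_left R S⟩
  by_cases hXS : X = S
  · exact ⟨R.bbox S, Finset.mem_insert_self _ _, hXS ▸ sub_bbox_right R S⟩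
  · exact ⟨X, Finset.mem_insert_of_mem (Finset.mem_erase.mpr ⟨hXS,
      Finset.mem_erase.mpr ⟨hXR, hX⟩⟩), Sub.refl X⟩

lemma reach_ne {F G : Finset Rect} (h : Relation.ReflTransGen MergeStep F G)
    (hF : ∀ R ∈ F, R.NE) : ∀ R ∈ G, R.NE := by
  induction h with
  | refl => exact hF
  | tail _ hstep ih => exact step_ne hstep ih

lemma reach_gen {F G : Finset Rect} (h : Relation.ReflTransGen MergeStep F G) :
    ∀ R ∈ G, Gen F R := by
  induction h with
  | refl => exact fun R hR => Gen.base hR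
  | tail _ hstep ih => exact step_gen hstep ih

lemma reach_cover {F G : Finset Rect} (h : Relation.ReflTransGen MergeStep F G) :
    ∀ X ∈ F, ∃ Y ∈ G, Sub X Y := by
  induction h with
  | refl => exact fun X hX => ⟨X, hX, Sub.refl X⟩
  | tail _ hstep ih =>
    intro X hX
    obtain ⟨Y, hY, hXY⟩ := ih X hX
    obtain ⟨Z, hZ, hYZ⟩ := step_cover hstep Y hY
    exact ⟨Z, hZ, hXY.trans hYZ⟩

lemma gen_covered {F G : Finset Rect} (hfin : Final G)
    (hcov : ∀ X ∈ F, ∃ Y ∈ G, Sub X Y) :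
    ∀ X, Gen F X → ∃ Y ∈ G, Sub X Y := by
  intro X hX
  induction hX with
  | base h => exact hcov _ h
  | @merge R S _ _ hover ihR ihS =>
    obtain ⟨A, hA, hsubA⟩ := ihR
    obtain ⟨B, hB, hsubB⟩ := ihS
    have hAB : A = B := by
      by_contra hne
      obtain ⟨p, hp1, hp2⟩ := hover
      exact hfin ⟨_, A, hA, B, hB, hne,
        ⟨p, toSet_mono hsubA hp1, toSet_mono hsubB hp2⟩, rfl⟩
    subst hAB
    exact ⟨A, hA, bbox_sub hsubA hsubB⟩

end RectMergeAux

open RectMergeAux in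
/-- Repeatedly replacing any two intersecting rectangles of a finite family of
    nonempty rectangles by their bounding box terminates (each step strictly
    decreases the cardinality), every final family consists of pairwise
    disjoint rectangles, and the final family is independent of the order of
    merges (confluence: any two final families reachable from the same initial
    family are equal). -/
theorem rect_merge_confluent (F : Finset Rect) (hF : ∀ R ∈ F, R.NE) :
    (∀ G H : Finset Rect, MergeStep G H → H.card < G.card) ∧
    (∀ G : Finset Rect, Relation.ReflTransGen MergeStep F G → Final G →
      ∀ R ∈ G, ∀ S ∈ G, R ≠ S → R.toSet ∩ S.toSet = ∅) ∧
    (∀ G1 G2 : Finset Rect, Relation.ReflTransGen MergeStep F G1 →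
      Relation.ReflTransGen MergeStep F G2 → Final G1 → Final G2 → G1 = G2) := by
  refine ⟨?_, ?_, ?_⟩
  · -- termination: cardinality strictly decreases
    rintro G H ⟨R, hR, S, hS, hRS, _, rfl⟩
    have hS' : S ∈ G.erase R := Finset.mem_erase.mpr ⟨fun h => hRS h.symm, hS⟩
    have h2 : 2 ≤ G.card := Finset.one_lt_card.mpr ⟨R, hR, S, hS, hRS⟩
    have hcard : ((G.erase R).erase S).card = G.card - 1 - 1 := by
      rw [Finset.card_erase_of_mem hS', Finset.card_erase_of_mem hR]
    calc (insert (R.bbox S) ((G.erase R).erase S)).card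
        ≤ ((G.erase R).erase S).card + 1 := Finset.card_insert_le _ _
      _ < G.card := by omega
  · -- final families are pairwise disjoint
    intro G _ hfin R hR S hS hne
    by_contra h
    exact hfin ⟨_, R, hR, S, hS, hne, Set.nonempty_iff_ne_empty.mpr h, rfl⟩
  · -- confluence
    have key : ∀ Ga Gb : Finset Rect, Relation.ReflTransGen MergeStep F Ga →
        Relation.ReflTransGen MergeStep F Gb → Final Ga → Final Gb → Ga ⊆ Gb := by
      intro Ga Gb ha hb hfa hfb X hX
      obtain ⟨A, hA, hXA⟩ := gen_covered hfb (reach_cover hb) X (reach_gen ha X hX)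
      obtain ⟨X', hX', hAX'⟩ := gen_covered hfa (reach_cover ha) A (reach_gen hb A hA)
      have hXX' : X = X' := by
        by_contra hne
        obtain ⟨p, hp⟩ := ne_nonempty (reach_ne ha hF X hX)
        exact hfa ⟨_, X, hX, X', hX', hne,
          ⟨p, hp, toSet_mono (hXA.trans hAX') hp⟩, rfl⟩
      subst hXX'
      exact (Sub.antisymm hAX' hXA) ▸ hA
    intro G1 G2 h1 h2 hf1 hf2
    exact Finset.Subset.antisymm (key G1 G2 h1 h2 hf1 hf2) (key G2 G1 h2 h1 hf2 hf1)
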